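/- arXiv:0803.1250 — 2 statements merged into one kernel-verified Lean document; each statement's English description precedes it below -/
import Mathlib

section
/- Let k ≥ 1 and let I : ℝ^k → ℝ^k be a distance-preserving map of Euclidean space. For every p ∈ ℝ^k and n ∈ ℕ, if the set X = {I^i(p) : i = 0, ..., n} has at least two elements, then |NND(X)| ≤ 3^k + 1. -/
/-- The nearest neighbor distance of `x` in `X`. -/
noncomputable def nnd {M : Type*} [MetricSpace M] (x : M) (X : Set M) : ℝ :=
  sInf (dist x '' (X \ {x}))

/-- The set of nearest neighbor distances of a set `X`. -/
noncomputable def NND {M : Type*} [MetricSpace M] (X : Set M) : Set ℝ :=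
  (fun x => nnd x X) '' X

/-!
Write `d m = dist p (I^[m] p)`. As `I` is an isometry, `dist (I^[i] p) (I^[j] p) = d |i - j|`,
so the nearest neighbour distance of `I^[i] p` is the least positive value of `d` on `[1, t]`,
where `t = max i (n - i) ≥ n / 2`. As `t` grows this least value changes only at record lows of
`d`, so apart from its value at `⌈n / 2⌉` every nearest neighbour distance is `d m` for a record
low `m ∈ (n / 2, n]`. For two such record lows `m < m'` we have `0 < m' - m < m`, hence
`dist (I^[m] p) (I^[m'] p) = d (m' - m) > d m > d m'`: in the triangle `p, I^[m] p, I^[m'] p`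
the side opposite `p` is the longest, so the angle at `p` is at least `π / 3` and the unit
vectors pointing from `p` to these points are `1`-separated. Disjoint balls of radius `1 / 2`
around them fit in the ball of radius `3 / 2`, and comparing volumes bounds their number by
`3 ^ k`.
-/

open Metric MeasureTheory Set Module RealInnerProductSpace

theorem Finset.card_le_three_pow_finrank_of_pairwise_one_le_dist
    {E : Type*} [NormedAddCommGroup E] [NormedSpace ℝ E] [FiniteDimensional ℝ E]
    {T : Finset E} (hT : ∀ x ∈ T, ‖x‖ ≤ 1)
    (hsep : (T : Set E).Pairwise fun x y => 1 ≤ dist x y) :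
    T.card ≤ 3 ^ finrank ℝ E := by
  borelize E
  let μ : Measure E := Measure.addHaar
  have hdisj : (T : Set E).PairwiseDisjoint fun x => ball x (1 / 2) :=
    hsep.mono' fun _ _ h => ball_disjoint_ball (by linarith)
  have hsub : (⋃ x ∈ T, ball x (1 / 2)) ⊆ ball (0 : E) (3 * (1 / 2)) :=
    iUnion₂_subset fun x hx => ball_subset_ball' (by rw [dist_zero_right]; linarith [hT x hx])
  have hvol : (T.card : ENNReal) * μ (ball 0 (1 / 2)) ≤ 3 ^ finrank ℝ E * μ (ball 0 (1 / 2)) := by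
    calc (T.card : ENNReal) * μ (ball 0 (1 / 2)) = μ (⋃ x ∈ T, ball x (1 / 2)) := by
          rw [measure_biUnion_finset hdisj fun x _ => measurableSet_ball]
          simp [μ, Measure.addHaar_ball_center]
      _ ≤ μ (ball 0 (3 * (1 / 2))) := measure_mono hsub
      _ = 3 ^ finrank ℝ E * μ (ball 0 (1 / 2)) := by
          rw [Measure.addHaar_ball_mul_of_pos μ 0 (by norm_num), ENNReal.ofReal_pow (by norm_num)]
          norm_num
  have := (ENNReal.mul_le_mul_iff_left (measure_ball_pos μ 0 (by norm_num)).ne'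
    measure_ball_lt_top.ne).mp hvol
  exact_mod_cast this

theorem Set.encard_le_three_pow_finrank_of_pairwise_one_le_dist
    {E : Type*} [NormedAddCommGroup E] [NormedSpace ℝ E] [FiniteDimensional ℝ E]
    {s : Set E} (hs : ∀ x ∈ s, ‖x‖ ≤ 1) (hsep : s.Pairwise fun x y => 1 ≤ dist x y) :
    s.encard ≤ 3 ^ finrank ℝ E := by
  by_contra! h
  obtain ⟨t, hts, ht⟩ := exists_subset_encard_eq (Order.add_one_le_of_lt h)
  have htfin : t.Finite := finite_of_encard_eq_coe ht
  have hcard := htfin.toFinset.card_le_three_pow_finrank_of_pairwise_one_le_dist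
    (fun x hx => hs x (hts (htfin.mem_toFinset.mp hx))) (by simpa using hsep.mono hts)
  rw [htfin.encard_eq_coe_toFinset_card] at ht
  norm_cast at ht
  omega

theorem one_le_norm_inv_smul_sub_inv_smul {E : Type*} [NormedAddCommGroup E]
    [InnerProductSpace ℝ E] {u v : E} (hu : u ≠ 0) (hv : v ≠ 0) (h : max ‖u‖ ‖v‖ ≤ ‖u - v‖) :
    1 ≤ ‖‖u‖⁻¹ • u - ‖v‖⁻¹ • v‖ := by
  have ha : 0 < ‖u‖ := norm_pos_iff.mpr hu
  have hb : 0 < ‖v‖ := norm_pos_iff.mpr hv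
  have hinner : ⟪u, v⟫ ≤ ‖u‖ * ‖v‖ / 2 := by
    have hcos := norm_sub_sq_real u v
    have hc := norm_nonneg (u - v)
    rcases le_total ‖u‖ ‖v‖ with hab | hab
    · nlinarith [max_eq_right hab ▸ h]
    · nlinarith [max_eq_left hab ▸ h]
  have hunit : ∀ w : E, w ≠ 0 → ‖‖w‖⁻¹ • w‖ = 1 := fun w hw => by
    rw [norm_smul, norm_inv, norm_norm, inv_mul_cancel₀ (norm_ne_zero_iff.mpr hw)]
  have hsq : 1 ≤ ‖‖u‖⁻¹ • u - ‖v‖⁻¹ • v‖ ^ 2 := by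
    rw [norm_sub_sq_real, hunit u hu, hunit v hv, real_inner_smul_left, real_inner_smul_right]
    have : ‖u‖⁻¹ * (‖v‖⁻¹ * ⟪u, v⟫) ≤ 1 / 2 := by
      rw [← mul_assoc, ← mul_inv, inv_mul_le_iff₀ (by positivity)]
      linarith
    linarith
  exact one_le_sq_iff_one_le_abs _ |>.mp hsq |>.trans_eq (abs_of_nonneg (norm_nonneg _))

theorem encard_le_three_pow_finrank_of_pairwise_max_dist_le
    {E : Type*} [NormedAddCommGroup E] [InnerProductSpace ℝ E] [FiniteDimensional ℝ E]
    {p : E} {s : Set E} (hp : p ∉ s)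
    (hs : s.Pairwise fun x y => max (dist p x) (dist p y) ≤ dist x y) :
    s.encard ≤ 3 ^ finrank ℝ E := by
  let f : E → E := fun x => ‖x - p‖⁻¹ • (x - p)
  have hne : ∀ x ∈ s, x - p ≠ 0 := fun x hx => sub_ne_zero.mpr (ne_of_mem_of_not_mem hx hp)
  have hsep : s.Pairwise fun x y => 1 ≤ dist (f x) (f y) := fun x hx y hy hxy => by
    change 1 ≤ dist (f x) (f y)
    rw [dist_eq_norm]
    refine one_le_norm_inv_smul_sub_inv_smul (hne x hx) (hne y hy) ?_
    simpa only [dist_comm p, dist_eq_norm, sub_sub_sub_cancel_right] using hs hx hy hxy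
  have hinj : InjOn f s := fun x hx y hy hxy =>
    by_contra fun h => absurd (hsep hx hy h) (by simp [hxy])
  rw [← hinj.encard_image]
  refine encard_le_three_pow_finrank_of_pairwise_one_le_dist ?_ (hinj.pairwise_image.mpr hsep)
  rintro _ ⟨x, hx, rfl⟩
  simp only [f, norm_smul, norm_inv, norm_norm, inv_mul_cancel₀ (norm_ne_zero_iff.mpr (hne x hx)),
    le_refl]

section RecordLows

variable (d : ℕ → ℝ)

def posIndices (t : ℕ) : Set ℕ := {j | 0 < j ∧ j ≤ t ∧ 0 < d j}

/-- Junk value `sInf ∅ = 0` when `d` has no positive value on `[1, t]`, just as `nnd x {x} = 0`. -/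
noncomputable def leastPos (t : ℕ) : ℝ := sInf (d '' posIndices d t)

def IsRecordLow (m : ℕ) : Prop := 0 < d m ∧ ∀ j, 0 < j → j < m → 0 < d j → d m < d j

variable {d}

theorem posIndices_mono : Monotone (posIndices d) :=
  fun _ _ hst _ ⟨hj, hjs, hdj⟩ => ⟨hj, hjs.trans hst, hdj⟩

theorem exists_isRecordLow_isLeast {t : ℕ} (h : (posIndices d t).Nonempty) :
    ∃ m ∈ posIndices d t, IsRecordLow d m ∧ IsLeast (d '' posIndices d t) (d m) := by
  classical
  have hfin : (posIndices d t).Finite := (finite_Iic t).subset fun j hj => hj.2.1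
  have hex : ∃ m, m ∈ posIndices d t ∧ ∀ j ∈ posIndices d t, d m ≤ d j :=
    exists_min_image _ d hfin h
  -- The earliest minimiser is a record low: an earlier index with the same value would be one too.
  obtain ⟨hm, hmin⟩ := Nat.find_spec hex
  refine ⟨Nat.find hex, hm, ⟨hm.2.2, fun j hj hjm hdj => ?_⟩, mem_image_of_mem d hm, ?_⟩
  · have hjt : j ∈ posIndices d t := ⟨hj, hjm.le.trans hm.2.1, hdj⟩
    refine (hmin j hjt).lt_of_ne fun heq => Nat.find_min hex hjm ⟨hjt, fun i hi => ?_⟩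
    exact heq ▸ hmin i hi
  · rintro _ ⟨j, hj, rfl⟩
    exact hmin j hj

theorem leastPos_mem_insert {a t : ℕ} (hat : a ≤ t) :
    leastPos d t ∈ insert (leastPos d a) (d '' {m | IsRecordLow d m ∧ a < m ∧ m ≤ t}) := by
  rcases (posIndices d t).eq_empty_or_nonempty with hempty | hne
  · have ha : posIndices d a = ∅ := eq_bot_mono (posIndices_mono hat) hempty
    left
    simp only [leastPos, hempty, ha]
  obtain ⟨m, hm, hrec, hleast⟩ := exists_isRecordLow_isLeast hne
  rw [show leastPos d t = d m from hleast.csInf_eq]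
  rcases lt_or_ge a m with ham | hma
  · exact Or.inr ⟨m, ⟨hrec, ham, hm.2.1⟩, rfl⟩
  · have hleast_a : IsLeast (d '' posIndices d a) (d m) :=
      ⟨mem_image_of_mem d ⟨hm.1, hma, hm.2.2⟩,
        lowerBounds_mono_set (image_mono (posIndices_mono hat)) hleast.2⟩
    exact Or.inl hleast_a.csInf_eq.symm

end RecordLows

section Orbit

variable {M : Type*} [MetricSpace M] {I : M → M}

protected theorem Isometry.iterate (hI : Isometry I) : ∀ n, Isometry I^[n]
  | 0 => isometry_id
  | n + 1 => (hI.iterate n).comp hI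

theorem Isometry.dist_iterate_iterate (hI : Isometry I) (p : M) {i j : ℕ} (hij : i ≤ j) :
    dist (I^[i] p) (I^[j] p) = dist p (I^[j - i] p) := by
  obtain ⟨m, rfl⟩ := Nat.exists_eq_add_of_le hij
  rw [Nat.add_sub_cancel_left, Function.iterate_add_apply, (hI.iterate i).dist_eq]

theorem Isometry.image_dist_iterate_diff (hI : Isometry I) (p : M) {i n : ℕ} (hi : i ≤ n) :
    dist (I^[i] p) '' ((fun j => I^[j] p) '' Iic n \ {I^[i] p}) =
      (fun m => dist p (I^[m] p)) '' posIndices (fun m => dist p (I^[m] p)) (max i (n - i)) := by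
  ext r
  constructor
  · rintro ⟨_, ⟨⟨j, hj : j ≤ n, rfl⟩, hji⟩, rfl⟩
    obtain ⟨m, hm, hdist⟩ : ∃ m ≤ max i (n - i), dist (I^[i] p) (I^[j] p) = dist p (I^[m] p) := by
      rcases le_total i j with hij | hji
      · exact ⟨j - i, by omega, hI.dist_iterate_iterate p hij⟩
      · exact ⟨i - j, by omega, by rw [dist_comm, hI.dist_iterate_iterate p hji]⟩
    have hpos : 0 < dist p (I^[m] p) := hdist ▸ dist_pos.mpr (Ne.symm hji)
    refine ⟨m, ⟨Nat.pos_of_ne_zero ?_, hm, hpos⟩, hdist.symm⟩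
    rintro rfl
    simp at hpos
  · rintro ⟨m, ⟨-, hmt, hpos⟩, rfl⟩
    obtain ⟨j, hj, hdist⟩ : ∃ j ≤ n, dist (I^[i] p) (I^[j] p) = dist p (I^[m] p) := by
      rcases le_or_gt (i + m) n with hin | hni
      · refine ⟨i + m, hin, ?_⟩
        rw [hI.dist_iterate_iterate p (Nat.le_add_right i m), Nat.add_sub_cancel_left]
      · have hmi : m ≤ i := by omega
        refine ⟨i - m, by omega, ?_⟩
        rw [dist_comm, hI.dist_iterate_iterate p (Nat.sub_le i m), Nat.sub_sub_self hmi]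
    refine ⟨I^[j] p, ⟨⟨j, hj, rfl⟩, fun hji => ?_⟩, hdist⟩
    rw [mem_singleton_iff.mp hji, dist_self] at hdist
    exact hpos.ne hdist

theorem Isometry.nnd_iterate (hI : Isometry I) (p : M) {i n : ℕ} (hi : i ≤ n) :
    nnd (I^[i] p) ((fun j => I^[j] p) '' Iic n) =
      leastPos (fun m => dist p (I^[m] p)) (max i (n - i)) := by
  rw [nnd, hI.image_dist_iterate_diff p hi, leastPos]

theorem Isometry.pairwise_max_dist_le_dist_of_isRecordLow (hI : Isometry I) (p : M)
    {a n : ℕ} (hn : n ≤ 2 * a) :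
    ((fun m => I^[m] p) ''
        {m | IsRecordLow (fun m => dist p (I^[m] p)) m ∧ a < m ∧ m ≤ n}).Pairwise
      fun x y => max (dist p x) (dist p y) ≤ dist x y := by
  have key : ∀ {m m'}, IsRecordLow (fun m => dist p (I^[m] p)) m → a < m →
      IsRecordLow (fun m => dist p (I^[m] p)) m' → m' ≤ n → m < m' → I^[m] p ≠ I^[m'] p →
      max (dist p (I^[m] p)) (dist p (I^[m'] p)) ≤ dist (I^[m] p) (I^[m'] p) := by
    intro m m' hrec ham hrec' hm'n hlt hne
    -- `m' - m < m` as both lie in `(n / 2, n]`, so the record low at `m` beats `m' - m`.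
    have hgap : dist p (I^[m] p) < dist p (I^[m' - m] p) := by
      refine hrec.2 _ (by omega) (by omega) ?_
      show 0 < dist p (I^[m' - m] p)
      rw [← hI.dist_iterate_iterate p hlt.le]
      exact dist_pos.mpr hne
    rw [max_eq_left (hrec'.2 m (by omega) hlt hrec.1).le, hI.dist_iterate_iterate p hlt.le]
    exact hgap.le
  rintro _ ⟨m, ⟨hrec, ham, hmn⟩, rfl⟩ _ ⟨m', ⟨hrec', ham', hm'n⟩, rfl⟩ hne
  rcases lt_trichotomy m m' with hlt | rfl | hlt
  · exact key hrec ham hrec' hm'n hlt hne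
  · exact absurd rfl hne
  · simpa only [max_comm, dist_comm] using key hrec' ham' hrec hmn hlt hne.symm

end Orbit

theorem Isometry.encard_image_isRecordLow_le {E : Type*} [NormedAddCommGroup E]
    [InnerProductSpace ℝ E] [FiniteDimensional ℝ E] {I : E → E} (hI : Isometry I) (p : E)
    {a n : ℕ} (hn : n ≤ 2 * a) :
    ((fun m => dist p (I^[m] p)) ''
        {m | IsRecordLow (fun m => dist p (I^[m] p)) m ∧ a < m ∧ m ≤ n}).encard ≤
      3 ^ finrank ℝ E := by
  rw [← image_image (dist p) (fun m => I^[m] p)]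
  refine (encard_image_le _ _).trans (encard_le_three_pow_finrank_of_pairwise_max_dist_le ?_
    (hI.pairwise_max_dist_le_dist_of_isRecordLow p hn))
  rintro ⟨m, ⟨hrec, -⟩, hmp⟩
  exact hrec.1.ne' (by simp [hmp])

theorem nnd_euclidean_isometry_general (k : ℕ)
    (I : EuclideanSpace ℝ (Fin k) → EuclideanSpace ℝ (Fin k)) (hI : Isometry I)
    (p : EuclideanSpace ℝ (Fin k)) (n : ℕ)
    (X : Set (EuclideanSpace ℝ (Fin k))) (hX : X = {x | ∃ i : ℕ, i ≤ n ∧ x = I^[i] p}) :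
    (NND X).encard ≤ 3 ^ k + 1 := by
  set d : ℕ → ℝ := fun m => dist p (I^[m] p)
  set a := n - n / 2
  have hX' : X = (fun i => I^[i] p) '' Iic n := by
    rw [hX]; ext; simp [eq_comm]
  have hNND : NND X ⊆ insert (leastPos d a) (d '' {m | IsRecordLow d m ∧ a < m ∧ m ≤ n}) := by
    rintro _ ⟨_, hx, rfl⟩
    rw [hX'] at hx ⊢
    obtain ⟨i, hi : i ≤ n, rfl⟩ := hx
    dsimp only
    rw [hI.nnd_iterate p hi]
    refine insert_subset_insert (image_mono fun m hm => ?_) (leastPos_mem_insert (by omega))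
    exact ⟨hm.1, hm.2.1, hm.2.2.trans (by omega)⟩
  calc (NND X).encard
      ≤ (d '' {m | IsRecordLow d m ∧ a < m ∧ m ≤ n}).encard + 1 :=
        (encard_mono hNND).trans (encard_insert_le _ _)
    _ ≤ 3 ^ k + 1 := by
        gcongr
        simpa only [finrank_euclideanSpace_fin] using
          hI.encard_image_isRecordLow_le p (a := a) (n := n) (by omega)

/-- For any distance-preserving map `I` of Euclidean `k`-space, any orbit segment
`{I^i(p) : i = 0, …, n}` with at least two elements has at most `3^k + 1` distinct
nearest neighbor distances. -/
theorem nnd_euclidean_isometry (k : ℕ) (hk : 1 ≤ k)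
    (I : EuclideanSpace ℝ (Fin k) → EuclideanSpace ℝ (Fin k)) (hI : Isometry I)
    (p : EuclideanSpace ℝ (Fin k)) (n : ℕ)
    (X : Set (EuclideanSpace ℝ (Fin k))) (hX : X = {x | ∃ i : ℕ, i ≤ n ∧ x = I^[i] p})
    (h2 : X.Nontrivial) :
    (NND X).encard ≤ 3 ^ k + 1 :=
  nnd_euclidean_isometry_general k I hI p n X hX
end

section
/- Let M be a metric space, I : M → M a distance-preserving map, p ∈ M, and n ∈ ℕ. Suppose the set O_n = {I^i(p) : i = 0, ..., n} has at least two elements. Then for every i with 0 ≤ i ≤ n, nnd(I^i(p), O_n) = nnd(I^{n−i}(p), O_n). -/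
theorem nnd_image_eq_of_dist_eq {ι M : Type*} [MetricSpace M] {g h : ι → M} {S : Set ι}
    (hgh : ∀ a ∈ S, ∀ b ∈ S, dist (g a) (g b) = dist (h a) (h b)) {i : ι} (hi : i ∈ S) :
    nnd (g i) (g '' S) = nnd (h i) (h '' S) := by
  have image_diff (f : ι → M) :
      f '' S \ {f i} = f '' {j ∈ S | f j ≠ f i} := by
    ext x; simp only [Set.mem_sdiff, Set.mem_image, Set.mem_singleton_iff, Set.mem_ofPred_eq]
    grind
  have same_indices : {j ∈ S | g j ≠ g i} = {j ∈ S | h j ≠ h i} := by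
    ext j
    simp only [Set.mem_ofPred_eq, and_congr_right_iff]
    intro hj
    rw [← dist_ne_zero (x := g j), ← dist_ne_zero (x := h j), hgh j hj i hi]
  unfold nnd
  rw [image_diff g, image_diff h, same_indices, Set.image_image, Set.image_image]
  congr 1
  exact Set.image_congr fun j hj => hgh i hi j hj.1

theorem Isometry.iterate_s8 {M : Type*} [MetricSpace M] {I : M → M} (hI : Isometry I) (k : ℕ) :
    Isometry I^[k] := by
  induction k with
  | zero => exact isometry_id
  | succ k ih => exact ih.comp hI

theorem Isometry.dist_iterate_iterate_add {M : Type*} [MetricSpace M] {I : M → M}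
    (hI : Isometry I) (p : M) (a k : ℕ) :
    dist (I^[a] p) (I^[a + k] p) = dist p (I^[k] p) := by
  rw [Function.iterate_add_apply]
  exact (hI.iterate_s8 a).dist_eq _ _

theorem Isometry.dist_iterate_sub_iterate_sub {M : Type*} [MetricSpace M] {I : M → M}
    (hI : Isometry I) (p : M) {n a b : ℕ} (ha : a ≤ n) (hb : b ≤ n) :
    dist (I^[n - a] p) (I^[n - b] p) = dist (I^[a] p) (I^[b] p) := by
  wlog hab : a ≤ b generalizing a b
  · rw [dist_comm, this hb ha (by omega), dist_comm]
  obtain ⟨k, rfl⟩ := Nat.exists_eq_add_of_le hab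
  rw [dist_comm, show n - a = n - (a + k) + k by omega, hI.dist_iterate_iterate_add,
    hI.dist_iterate_iterate_add]

theorem orbit_segment_eq_image_sub {M : Type*} (I : M → M) (p : M) (n : ℕ) :
    {x | ∃ i : ℕ, i ≤ n ∧ x = I^[i] p} = (fun j => I^[n - j] p) '' Set.Iic n := by
  ext x
  constructor
  · rintro ⟨i, hi, rfl⟩
    exact ⟨n - i, Nat.sub_le n i, by simp only [Nat.sub_sub_self hi]⟩
  · rintro ⟨j, -, rfl⟩
    exact ⟨n - j, Nat.sub_le n j, rfl⟩

theorem nnd_orbit_symm_general {M : Type*} [MetricSpace M]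
    (I : M → M) (hI : Isometry I) (p : M) (n : ℕ)
    (O : Set M) (hO : O = {x | ∃ i : ℕ, i ≤ n ∧ x = I^[i] p}) :
    ∀ i : ℕ, i ≤ n → nnd (I^[i] p) O = nnd (I^[n - i] p) O := by
  intro i hi
  have hO_iter : O = (fun j => I^[j] p) '' Set.Iic n := by
    rw [hO]; ext x; simp only [Set.mem_ofPred_eq, Set.mem_image, Set.mem_Iic, eq_comm]
  have hO_refl : O = (fun j => I^[n - j] p) '' Set.Iic n :=
    hO.trans (orbit_segment_eq_image_sub I p n)
  conv_lhs => rw [hO_iter]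
  conv_rhs => rw [hO_refl]
  exact nnd_image_eq_of_dist_eq
    (fun a ha b hb => (hI.dist_iterate_sub_iterate_sub p ha hb).symm) hi

/-- For an orbit segment `O_n = {I^i(p) : i = 0, …, n}` of an isometry with at least two
elements, `nnd(I^i(p), O_n) = nnd(I^{n-i}(p), O_n)` for all `0 ≤ i ≤ n`. -/
theorem nnd_orbit_symm {M : Type*} [MetricSpace M]
    (I : M → M) (hI : Isometry I) (p : M) (n : ℕ)
    (O : Set M) (hO : O = {x | ∃ i : ℕ, i ≤ n ∧ x = I^[i] p})
    (h2 : O.Nontrivial) :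
    ∀ i : ℕ, i ≤ n → nnd (I^[i] p) O = nnd (I^[n - i] p) O :=
  nnd_orbit_symm_general I hI p n O hO
end
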